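/- arXiv:1807.01261 — 2 statements merged into one kernel-verified Lean document; each statement's English description precedes it below -/
import Mathlib

section
/- Construction of an entropy conservative residual distribution/FR scheme: Let S be a nonempty finite set (the degrees of freedom of an element), p ≥ 1, and v : S → ℝ^p with mean v̄ = (1/|S|)·Σ_{σ∈S} v_σ, and assume Σ_{σ∈S} ‖v_σ − v̄‖² ≠ 0. Let Φ : S → ℝ^p be any family of residuals and G ∈ ℝ (the boundary entropy-flux quadrature value). Define the entropy error E = G − Σ_{σ∈S} ⟨v_σ, Φ_σ⟩, the scalar α = E / (Σ_{σ∈S} ‖v_σ − v̄‖²), and the correction τ_σ = α·(v_σ − v̄). Then the corrected residuals Φ_σ^{CS} = Φ_σ + τ_σ satisfy: (i) conservation, Σ_{σ∈S} Φ_σ^{CS} = Σ_{σ∈S} Φ_σ, and (ii) the entropy conservation relation Σ_{σ∈S} ⟨v_σ, Φ_σ^{CS}⟩ = G. -/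
open RealInnerProductSpace Finset

/- The correction is proportional to the fluctuations `v_σ - v̄`, which sum to zero: this gives
conservation, and it turns `Σ ⟪v_σ, v_σ - v̄⟫` into `Σ ‖v_σ - v̄‖²`, so that adding `α (v_σ - v̄)`
raises the entropy production by exactly `α Σ ‖v_σ - v̄‖² = E`. -/

theorem Finset.sum_sub_inv_card_smul_sum_eq_zero {ι 𝕜 E : Type*} [DivisionRing 𝕜] [CharZero 𝕜]
    [AddCommGroup E] [Module 𝕜 E] (s : Finset ι) (v : ι → E) :
    ∑ i ∈ s, (v i - (#s : 𝕜)⁻¹ • ∑ j ∈ s, v j) = 0 := by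
  rw [sum_sub_distrib, sum_const, ← Nat.cast_smul_eq_nsmul 𝕜, smul_smul]
  rcases s.eq_empty_or_nonempty with rfl | hs
  · simp
  · rw [mul_inv_cancel₀ (by exact_mod_cast hs.card_ne_zero), one_smul, sub_self]

theorem Finset.sum_inner_sub_eq_sum_norm_sub_sq {ι E : Type*} [NormedAddCommGroup E]
    [InnerProductSpace ℝ E] {s : Finset ι} {v : ι → E} {c : E}
    (hc : ∑ i ∈ s, (v i - c) = 0) :
    ∑ i ∈ s, ⟪v i, v i - c⟫ = ∑ i ∈ s, ‖v i - c‖ ^ 2 := by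
  calc ∑ i ∈ s, ⟪v i, v i - c⟫
      = ∑ i ∈ s, (⟪v i - c, v i - c⟫ + ⟪c, v i - c⟫) := by
        simp only [← inner_add_left, sub_add_cancel]
    _ = ∑ i ∈ s, ‖v i - c‖ ^ 2 + ⟪c, ∑ i ∈ s, (v i - c)⟫ := by
        simp only [sum_add_distrib, real_inner_self_eq_norm_sq, inner_sum]
    _ = ∑ i ∈ s, ‖v i - c‖ ^ 2 := by rw [hc, inner_zero_right, add_zero]

theorem entropy_conservative_correction_general
    {S : Type*} [Fintype S] {p : ℕ}
    (v Φ : S → EuclideanSpace ℝ (Fin p)) (G : ℝ)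
    (vbar : EuclideanSpace ℝ (Fin p))
    (hvbar : vbar = (Fintype.card S : ℝ)⁻¹ • ∑ σ, v σ)
    (hden : ∑ σ, ‖v σ - vbar‖ ^ 2 ≠ 0)
    (E α : ℝ)
    (hE : E = G - ∑ σ, ⟪v σ, Φ σ⟫)
    (hα : α = E / ∑ σ, ‖v σ - vbar‖ ^ 2)
    (τ ΦCS : S → EuclideanSpace ℝ (Fin p))
    (hτ : ∀ σ, τ σ = α • (v σ - vbar))
    (hΦCS : ∀ σ, ΦCS σ = Φ σ + τ σ) :
    (∑ σ, ΦCS σ = ∑ σ, Φ σ) ∧ (∑ σ, ⟪v σ, ΦCS σ⟫ = G) := by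
  have hcentered : ∑ σ, (v σ - vbar) = 0 :=
    hvbar ▸ Finset.sum_sub_inv_card_smul_sum_eq_zero (𝕜 := ℝ) univ v
  obtain rfl : τ = fun σ ↦ α • (v σ - vbar) := funext hτ
  obtain rfl : ΦCS = fun σ ↦ Φ σ + α • (v σ - vbar) := funext hΦCS
  constructor
  · rw [sum_add_distrib, ← smul_sum, hcentered, smul_zero, add_zero]
  · simp only [inner_add_right, sum_add_distrib, real_inner_smul_right, ← mul_sum,
      sum_inner_sub_eq_sum_norm_sub_sq hcentered]
    rw [hα, div_mul_cancel₀ _ hden, hE, add_sub_cancel]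

/-- Construction of an entropy conservative residual distribution/FR scheme:
the corrected residuals `Φ^{CS} = Φ + τ` with `τ_σ = α • (v_σ - v̄)`,
`α = E / Σ ‖v_σ - v̄‖²`, `E = G - Σ ⟪v_σ, Φ_σ⟫`, are conservative and
satisfy the entropy conservation relation. -/
theorem entropy_conservative_correction
    {S : Type*} [Fintype S] [Nonempty S] {p : ℕ} (hp : 1 ≤ p)
    (v Φ : S → EuclideanSpace ℝ (Fin p)) (G : ℝ)
    (vbar : EuclideanSpace ℝ (Fin p))
    (hvbar : vbar = (Fintype.card S : ℝ)⁻¹ • ∑ σ, v σ)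
    (hden : ∑ σ, ‖v σ - vbar‖ ^ 2 ≠ 0)
    (E α : ℝ)
    (hE : E = G - ∑ σ, ⟪v σ, Φ σ⟫)
    (hα : α = E / ∑ σ, ‖v σ - vbar‖ ^ 2)
    (τ ΦCS : S → EuclideanSpace ℝ (Fin p))
    (hτ : ∀ σ, τ σ = α • (v σ - vbar))
    (hΦCS : ∀ σ, ΦCS σ = Φ σ + τ σ) :
    (∑ σ, ΦCS σ = ∑ σ, Φ σ) ∧ (∑ σ, ⟪v σ, ΦCS σ⟫ = G) :=
  entropy_conservative_correction_general v Φ G vbar hvbar hden E α hE hα τ ΦCS hτ hΦCS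
end

section
/- Entropy stability of flux reconstruction schemes under Tadmor-type conditions (conclusion of the appendix, discrete quadrature form): Let S and Q be finite sets, p, d ≥ 1. Let v : S → ℝ^p, θ : S → ℝ^d, F : S × S → ℝ^p antisymmetric, and n̂ : S × S → ℝ^d antisymmetric; let w : Q → ℝ, and for q ∈ Q let v_q, v⁻_q ∈ ℝ^p, Θ_q, Θ⁻_q ∈ ℝ^d, n_q ∈ ℝ^d, f̂_q ∈ ℝ^p; set ĝ_q = ⟨(v_q+v⁻_q)/2, f̂_q⟩ − ⟨(Θ_q+Θ⁻_q)/2, n_q⟩. Define the residuals Φ_σ = Σ_{σ'∈S} F(σ,σ') + b_σ with b : S → ℝ^p satisfying Σ_{σ∈S} ⟨v_σ, b_σ⟩ = Σ_{q∈Q} w_q ⟨v_q, f̂_q⟩. Assume: (i) w_q ≥ 0 and the Tadmor boundary condition ⟨v⁻_q − v_q, f̂_q⟩ − ⟨Θ⁻_q − Θ_q, n_q⟩ ≤ 0 for every q ∈ Q; (ii) the interior Tadmor-type condition (1/2)·Σ_{σ,σ'∈S} ( ⟨v_σ − v_{σ'}, F(σ,σ')⟩ − ⟨θ_σ − θ_{σ'},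 n̂(σ,σ')⟩ ) ≥ 0; (iii) the compatibility relation Σ_{q∈Q} w_q ⟨Θ_q, n_q⟩ = −Σ_{σ∈S} ⟨θ_σ, Σ_{σ'∈S} n̂(σ,σ')⟩. Then the entropy stability inequality Σ_{σ∈S} ⟨v_σ, Φ_σ⟩ ≥ Σ_{q∈Q} w_q ĝ_q holds. -/
open RealInnerProductSpace

/-!
By antisymmetry of `F` and `n̂`, the interior Tadmor condition says exactly that the nodal volume
term `∑ ⟨v_σ, ∑ F(σ,σ')⟩` dominates `∑ ⟨θ_σ, ∑ n̂(σ,σ')⟩`, which the compatibility relation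
identifies with minus the boundary potential term `∑ w_q ⟨Θ_q, n_q⟩`. On the boundary the central
entropy flux `ĝ_q` is bounded by the one-sided flux `⟨v_q, f̂_q⟩ - ⟨Θ_q, n_q⟩`, and the weights
are nonnegative; adding the two estimates gives the claim.
-/

lemma sum_sum_inner_sub_of_antisymm {S E : Type*} [Fintype S]
    [NormedAddCommGroup E] [InnerProductSpace ℝ E]
    (u : S → E) (G : S → S → E) (hG : ∀ σ σ', G σ' σ = -G σ σ') :
    ∑ σ, ∑ σ', ⟪u σ - u σ', G σ σ'⟫ = 2 * ∑ σ, ⟪u σ, ∑ σ', G σ σ'⟫ := by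
  have hswap : ∑ σ, ∑ σ', ⟪u σ', G σ σ'⟫ = -∑ σ, ∑ σ', ⟪u σ, G σ σ'⟫ := by
    rw [Finset.sum_comm, ← Finset.sum_neg_distrib]
    refine Finset.sum_congr rfl fun σ _ => ?_
    rw [← Finset.sum_neg_distrib]
    exact Finset.sum_congr rfl fun σ' _ => by rw [hG, inner_neg_right]
  simp_rw [inner_sub_left, Finset.sum_sub_distrib, hswap, inner_sum]
  ring

/-- The central flux exceeds the one-sided one by half the jump. -/
lemma inner_midpoint_sub_inner_midpoint_le {E F : Type*}
    [NormedAddCommGroup E] [InnerProductSpace ℝ E] [NormedAddCommGroup F] [InnerProductSpace ℝ F]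
    (v v' f : E) (Θ Θ' n : F) (htadmor : ⟪v' - v, f⟫ - ⟪Θ' - Θ, n⟫ ≤ 0) :
    ⟪(1 / 2 : ℝ) • (v + v'), f⟫ - ⟪(1 / 2 : ℝ) • (Θ + Θ'), n⟫ ≤ ⟪v, f⟫ - ⟪Θ, n⟫ := by
  simp only [inner_sub_left, real_inner_smul_left, inner_add_left] at htadmor ⊢
  linarith

theorem entropy_stability_tadmor_general
    {S Q : Type*} [Fintype S] [Fintype Q] {p d : ℕ}
    (v : S → EuclideanSpace ℝ (Fin p))
    (θ : S → EuclideanSpace ℝ (Fin d))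
    (F : S → S → EuclideanSpace ℝ (Fin p))
    (hF : ∀ σ σ', F σ' σ = -F σ σ')
    (nhat : S → S → EuclideanSpace ℝ (Fin d))
    (hnhat : ∀ σ σ', nhat σ' σ = -nhat σ σ')
    (w : Q → ℝ)
    (vq vmq : Q → EuclideanSpace ℝ (Fin p))
    (Θq Θmq nq : Q → EuclideanSpace ℝ (Fin d))
    (fq : Q → EuclideanSpace ℝ (Fin p))
    (gq : Q → ℝ)
    (hg : ∀ q, gq q = ⟪(1 / 2 : ℝ) • (vq q + vmq q), fq q⟫
      - ⟪(1 / 2 : ℝ) • (Θq q + Θmq q), nq q⟫)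
    (b : S → EuclideanSpace ℝ (Fin p))
    (Φ : S → EuclideanSpace ℝ (Fin p))
    (hΦ : ∀ σ, Φ σ = (∑ σ', F σ σ') + b σ)
    (hb : ∑ σ, ⟪v σ, b σ⟫ = ∑ q, w q * ⟪vq q, fq q⟫)
    (hw : ∀ q, 0 ≤ w q)
    (hTadmorBd : ∀ q, ⟪vmq q - vq q, fq q⟫ - ⟪Θmq q - Θq q, nq q⟫ ≤ 0)
    (hTadmorInt : 0 ≤ (1 / 2 : ℝ) *
      ∑ σ, ∑ σ', (⟪v σ - v σ', F σ σ'⟫ - ⟪θ σ - θ σ', nhat σ σ'⟫))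
    (hcompat : ∑ q, w q * ⟪Θq q, nq q⟫ = -∑ σ, ⟪θ σ, ∑ σ', nhat σ σ'⟫) :
    ∑ σ, ⟪v σ, Φ σ⟫ ≥ ∑ q, w q * gq q := by
  have hInterior : ∑ σ, ⟪θ σ, ∑ σ', nhat σ σ'⟫ ≤ ∑ σ, ⟪v σ, ∑ σ', F σ σ'⟫ := by
    simp only [Finset.sum_sub_distrib, sum_sum_inner_sub_of_antisymm v F hF,
      sum_sum_inner_sub_of_antisymm θ nhat hnhat] at hTadmorInt
    linarith
  have hVolume : ∑ σ, ⟪v σ, Φ σ⟫ = ∑ σ, ⟪v σ, ∑ σ', F σ σ'⟫ + ∑ q, w q * ⟪vq q, fq q⟫ := by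
    simp only [hΦ, inner_add_right, Finset.sum_add_distrib, hb]
  have hBoundary :
      ∑ q, w q * gq q ≤ ∑ q, w q * ⟪vq q, fq q⟫ - ∑ q, w q * ⟪Θq q, nq q⟫ := by
    rw [← Finset.sum_sub_distrib]
    refine Finset.sum_le_sum fun q _ => ?_
    rw [hg, ← mul_sub]
    exact mul_le_mul_of_nonneg_left
      (inner_midpoint_sub_inner_midpoint_le _ _ _ _ _ _ (hTadmorBd q)) (hw q)
  linarith

/-- Entropy stability of flux reconstruction schemes under Tadmor-type
conditions (conclusion of the appendix, discrete quadrature form). -/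
theorem entropy_stability_tadmor
    {S Q : Type*} [Fintype S] [Fintype Q] {p d : ℕ} (hp : 1 ≤ p) (hd : 1 ≤ d)
    (v : S → EuclideanSpace ℝ (Fin p))
    (θ : S → EuclideanSpace ℝ (Fin d))
    (F : S → S → EuclideanSpace ℝ (Fin p))
    (hF : ∀ σ σ', F σ' σ = -F σ σ')
    (nhat : S → S → EuclideanSpace ℝ (Fin d))
    (hnhat : ∀ σ σ', nhat σ' σ = -nhat σ σ')
    (w : Q → ℝ)
    (vq vmq : Q → EuclideanSpace ℝ (Fin p))
    (Θq Θmq nq : Q → EuclideanSpace ℝ (Fin d))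
    (fq : Q → EuclideanSpace ℝ (Fin p))
    (gq : Q → ℝ)
    (hg : ∀ q, gq q = ⟪(1 / 2 : ℝ) • (vq q + vmq q), fq q⟫
      - ⟪(1 / 2 : ℝ) • (Θq q + Θmq q), nq q⟫)
    (b : S → EuclideanSpace ℝ (Fin p))
    (Φ : S → EuclideanSpace ℝ (Fin p))
    (hΦ : ∀ σ, Φ σ = (∑ σ', F σ σ') + b σ)
    (hb : ∑ σ, ⟪v σ, b σ⟫ = ∑ q, w q * ⟪vq q, fq q⟫)
    (hw : ∀ q, 0 ≤ w q)
    (hTadmorBd : ∀ q, ⟪vmq q - vq q, fq q⟫ - ⟪Θmq q - Θq q, nq q⟫ ≤ 0)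
    (hTadmorInt : 0 ≤ (1 / 2 : ℝ) *
      ∑ σ, ∑ σ', (⟪v σ - v σ', F σ σ'⟫ - ⟪θ σ - θ σ', nhat σ σ'⟫))
    (hcompat : ∑ q, w q * ⟪Θq q, nq q⟫ = -∑ σ, ⟪θ σ, ∑ σ', nhat σ σ'⟫) :
    ∑ σ, ⟪v σ, Φ σ⟫ ≥ ∑ q, w q * gq q :=
  entropy_stability_tadmor_general v θ F hF nhat hnhat w vq vmq Θq Θmq nq fq gq hg b Φ hΦ hb hw
    hTadmorBd hTadmorInt hcompat
end
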